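/- arXiv:2410.01528 — 7 statements merged into one kernel-verified Lean document; each statement's English description precedes it below -/
import Mathlib

section
/- Let m, K be integers with 1 ≤ m < K, and let w = max(⌊m/(K−m)⌋, 1) and h = ⌈(K−m)/m⌉. If a binary sequence σ : ℕ → Bool satisfies the weakly-hard constraint (w, w+h) (every window of w+h consecutive indices contains at most w misses), then σ satisfies the weakly-hard constraint (m, K) (every window of K consecutive indices contains at most m misses). -/
/-- If a binary sequence satisfies the weakly-hard constraint
(w, w+h), where `w = max(⌊m/(K−m)⌋, 1)` and `h = ⌈(K−m)/m⌉`, then it satisfies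
the weakly-hard constraint (m, K). -/
theorem harder_constraint_implies_mK (m K w h : ℕ) (hm : 1 ≤ m) (hK : m < K)
    (hw : (w : ℤ) = max ⌊(m : ℚ) / ((K : ℚ) - (m : ℚ))⌋ 1)
    (hh : (h : ℤ) = ⌈((K : ℚ) - (m : ℚ)) / (m : ℚ)⌉)
    (σ : ℕ → Bool)
    (hσ : ∀ i : ℕ,
      ((Finset.Ico i (i + (w + h))).filter (fun j => σ j = false)).card ≤ w) :
    ∀ i : ℕ,
      ((Finset.Ico i (i + K)).filter (fun j => σ j = false)).card ≤ m := by
  intro i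
  obtain ⟨d, hd⟩ : ∃ d, K = m + d := ⟨K - m, by omega⟩
  have hd0 : 0 < d := by omega
  have hdq : (K : ℚ) - (m : ℚ) = (d : ℚ) := by rw [hd]; push_cast; ring
  rw [hdq] at hw hh
  have hdQ0 : (0:ℚ) < (d:ℚ) := by exact_mod_cast hd0
  have hmQ0 : (0:ℚ) < (m:ℚ) := by exact_mod_cast hm
  have hw1 : 1 ≤ w := by
    have : (1:ℤ) ≤ (w:ℤ) := hw ▸ le_max_right _ _
    exact_mod_cast this
  have hmh : d ≤ m * h := by
    have h1 : (d:ℚ) / (m:ℚ) ≤ ((h:ℤ) : ℚ) := hh ▸ Int.le_ceil _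
    have h2 : (d:ℚ) ≤ (m:ℚ) * (h:ℚ) := by
      rw [div_le_iff₀ hmQ0] at h1; push_cast at h1 ⊢; linarith
    exact_mod_cast h2
  -- block lemma
  have key : ∀ q j, ((Finset.Ico j (j + q * (w + h))).filter
      (fun x => σ x = false)).card ≤ q * w := by
    intro q
    induction q with
    | zero => simp
    | succ n ih =>
      intro j
      have hmono : n * (w + h) ≤ (n + 1) * (w + h) :=
        Nat.mul_le_mul_right _ (by omega)
      have hsplit : Finset.Ico j (j + (n + 1) * (w + h)) =
          Finset.Ico j (j + n * (w + h)) ∪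
          Finset.Ico (j + n * (w + h)) (j + (n + 1) * (w + h)) := by
        rw [Finset.Ico_union_Ico_eq_Ico (by omega) (by omega)]
      rw [hsplit, Finset.filter_union]
      calc _ ≤ _ + _ := Finset.card_union_le _ _
        _ ≤ n * w + w := by
            apply Nat.add_le_add (ih j)
            have he : j + (n + 1) * (w + h) = (j + n * (w + h)) + (w + h) := by ring
            rw [he]; exact hσ _
        _ = (n + 1) * w := by ring
  set q := K / (w + h) with hqdef
  set r := K % (w + h) with hrdef
  have hBpos : 0 < w + h := by omega
  have hqr : q * (w + h) + r = K := by
    rw [hqdef, hrdef, Nat.mul_comm]; exact Nat.div_add_mod K (w + h)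
  have hrlt : r < w + h := Nat.mod_lt _ hBpos
  have hsplit : Finset.Ico i (i + K) =
      Finset.Ico i (i + q * (w + h)) ∪ Finset.Ico (i + q * (w + h)) (i + K) := by
    rw [Finset.Ico_union_Ico_eq_Ico (by omega) (by omega)]
  have hrem : ((Finset.Ico (i + q * (w + h)) (i + K)).filter
      (fun x => σ x = false)).card ≤ min r w := by
    apply le_min
    · calc _ ≤ (Finset.Ico (i + q * (w + h)) (i + K)).card :=
            Finset.card_filter_le _ _
        _ = r := by rw [Nat.card_Ico]; omega
    · calc _ ≤ ((Finset.Ico (i + q * (w + h)) (i + q * (w + h) + (w + h))).filter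
            (fun x => σ x = false)).card := by
            apply Finset.card_le_card
            apply Finset.filter_subset_filter
            exact Finset.Ico_subset_Ico le_rfl (by omega)
        _ ≤ w := hσ _
  have hmain : ((Finset.Ico i (i + K)).filter (fun x => σ x = false)).card ≤
      q * w + min r w := by
    rw [hsplit, Finset.filter_union]
    calc _ ≤ _ + _ := Finset.card_union_le _ _
      _ ≤ q * w + min r w := Nat.add_le_add (key q i) hrem
  refine hmain.trans ?_
  by_cases hdm : d ≤ m
  · -- case d ≤ m : w = ⌊m/d⌋, h = 1
    have hfloor1 : (1:ℤ) ≤ ⌊(m:ℚ) / (d:ℚ)⌋ := by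
      apply Int.le_floor.mpr
      rw [Int.cast_one, le_div_iff₀ hdQ0, one_mul]
      exact_mod_cast hdm
    have hwf : (w:ℤ) = ⌊(m:ℚ) / (d:ℚ)⌋ := by rw [hw, max_eq_left hfloor1]
    have hwd : w * d ≤ m := by
      have h1 : ((w:ℤ):ℚ) ≤ (m:ℚ) / (d:ℚ) := hwf ▸ Int.floor_le _
      have h2 : (w:ℚ) * (d:ℚ) ≤ (m:ℚ) := by
        rw [← le_div_iff₀ hdQ0]; exact_mod_cast h1
      exact_mod_cast h2
    have hh1 : h = 1 := by
      have hle : (h:ℤ) ≤ 1 := by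
        rw [hh]
        apply Int.ceil_le.mpr
        rw [Int.cast_one, div_le_one hmQ0]
        exact_mod_cast hdm
      have hge : (1:ℤ) ≤ (h:ℤ) := by
        rw [hh]; exact Int.ceil_pos.mpr (by positivity)
      omega
    subst hh1
    have e1 : q * (w + 1) = q * w + q := by ring
    have e2 : q * w + q + r = m + d := by linarith [hqr, hd]
    have h3 : d * (w + 1) < (q + 1) * (w + 1) := by
      have a1 : d * (w + 1) = w * d + d := by ring
      have a2 : (q + 1) * (w + 1) = q * (w + 1) + (w + 1) := by ring
      linarith
    have hdq2 : d ≤ q := by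
      have := lt_of_mul_lt_mul_right h3 (Nat.zero_le (w + 1))
      omega
    linarith [Nat.min_le_left r w]
  · -- case d > m : w = 1
    push_neg at hdm
    have hf0 : ⌊(m:ℚ) / (d:ℚ)⌋ = 0 := by
      apply Int.floor_eq_zero_iff.mpr
      constructor
      · positivity
      · rw [div_lt_one hdQ0]; exact_mod_cast hdm
    have hwe : w = 1 := by
      have : (w:ℤ) = 1 := by rw [hw, hf0]; simp
      exact_mod_cast this
    have hKle : K ≤ m * (w + h) := by
      have a1 : m * (w + h) = m + m * h := by rw [hwe]; ring
      omega
    have hqm : q ≤ m := by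
      by_contra hc
      push_neg at hc
      have : m * (w + h) < q * (w + h) := (Nat.mul_lt_mul_right hBpos).mpr hc
      omega
    rcases Nat.eq_zero_or_pos r with h0 | h1
    · rw [h0, hwe]; omega
    · have hqm' : q < m := by
        by_contra hc
        push_neg at hc
        have : m * (w + h) ≤ q * (w + h) := Nat.mul_le_mul_right _ hc
        omega
      rw [hwe]; omega
end

section
/- Let m, K be integers with 1 ≤ m < K and 2m < K (low-tolerance case), and let h = ⌈(K−m)/m⌉. If a binary sequence σ : ℕ → Bool is such that every window of 1+h consecutive indices contains at most 1 miss, then every window of K consecutive indices contains at most m misses. -/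
lemma block_count (h : ℕ) (σ : ℕ → Bool)
    (hσ : ∀ i : ℕ,
      ((Finset.Ico i (i + (1 + h))).filter (fun j => σ j = false)).card ≤ 1) :
    ∀ t i : ℕ,
      ((Finset.Ico i (i + t * (1 + h))).filter (fun j => σ j = false)).card ≤ t := by
  intro t
  induction t with
  | zero => intro i; simp
  | succ t ih =>
    intro i
    have hsplit : Finset.Ico i (i + (1 + h)) ∪
        Finset.Ico (i + (1 + h)) (i + (t + 1) * (1 + h)) =
        Finset.Ico i (i + (t + 1) * (1 + h)) := by
      apply Finset.Ico_union_Ico_eq_Ico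
      · omega
      · nlinarith
    rw [← hsplit, Finset.filter_union]
    calc _ ≤ _ := Finset.card_union_le _ _
      _ ≤ 1 + t := by
          gcongr
          · exact hσ i
          · have := ih (i + (1 + h))
            have heq : i + (1 + h) + t * (1 + h) = i + (t + 1) * (1 + h) := by ring
            rwa [heq] at this
      _ = t + 1 := by omega

/-- Low-tolerance case (2m < K), h = ⌈(K−m)/m⌉. If every window of
1+h consecutive indices contains at most 1 miss, then every window of K
consecutive indices contains at most m misses. -/
theorem low_tolerance_window (m K h : ℕ) (hm : 1 ≤ m) (hK : m < K)
    (hlow : 2 * m < K)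
    (hh : (h : ℤ) = ⌈((K : ℚ) - (m : ℚ)) / (m : ℚ)⌉)
    (σ : ℕ → Bool)
    (hσ : ∀ i : ℕ,
      ((Finset.Ico i (i + (1 + h))).filter (fun j => σ j = false)).card ≤ 1) :
    ∀ i : ℕ,
      ((Finset.Ico i (i + K)).filter (fun j => σ j = false)).card ≤ m := by
  have hmq : (0 : ℚ) < (m : ℚ) := by exact_mod_cast hm
  have hceil : ((K : ℚ) - (m : ℚ)) / (m : ℚ) ≤ ((h : ℤ) : ℚ) := by
    rw [hh]; exact Int.le_ceil _
  have hq : (K : ℚ) - (m : ℚ) ≤ (h : ℚ) * (m : ℚ) := by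
    rw [div_le_iff₀ hmq] at hceil
    push_cast at hceil ⊢
    linarith
  have hKle : K ≤ m * (1 + h) := by
    have : (K : ℚ) ≤ (m : ℚ) * (1 + (h : ℚ)) := by linarith
    exact_mod_cast this
  intro i
  have hsub : Finset.Ico i (i + K) ⊆ Finset.Ico i (i + m * (1 + h)) := by
    apply Finset.Ico_subset_Ico le_rfl
    omega
  calc ((Finset.Ico i (i + K)).filter (fun j => σ j = false)).card
      ≤ ((Finset.Ico i (i + m * (1 + h))).filter (fun j => σ j = false)).card :=
        Finset.card_le_card (Finset.filter_subset_filter _ hsub)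
    _ ≤ m := block_count h σ hσ m i
end

section
/- Let m, K be integers with 1 ≤ m < K and 2m ≥ K (high-tolerance case), and let w = ⌊m/(K−m)⌋. If a binary sequence σ : ℕ → Bool is such that every window of w+1 consecutive indices contains at least 1 hit, then every window of K consecutive indices contains at least K−m hits (equivalently, at most m misses). -/
lemma aux_blocks (w : ℕ) (σ : ℕ → Bool)
    (hσ : ∀ i : ℕ,
      1 ≤ ((Finset.Ico i (i + (w + 1))).filter (fun j => σ j = true)).card) :
    ∀ n i : ℕ, n ≤ ((Finset.Ico i (i + n * (w + 1))).filter (fun j => σ j = true)).card := by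
  intro n
  induction n with
  | zero => intro i; simp
  | succ n ih =>
    intro i
    have hsplit : Finset.Ico i (i + (n+1) * (w+1)) =
        Finset.Ico i (i + n * (w+1)) ∪ Finset.Ico (i + n * (w+1)) (i + (n+1) * (w+1)) := by
      exact (Finset.Ico_union_Ico_eq_Ico (by omega) (by exact Nat.add_le_add_left (Nat.mul_le_mul_right _ (by omega)) i)).symm
    rw [hsplit, Finset.filter_union]
    have hdisj : Disjoint
        ((Finset.Ico i (i + n * (w+1))).filter (fun j => σ j = true))
        ((Finset.Ico (i + n * (w+1)) (i + (n+1) * (w+1))).filter (fun j => σ j = true)) := by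
      apply Finset.disjoint_filter_filter
      apply Finset.Ico_disjoint_Ico_consecutive
    rw [Finset.card_union_of_disjoint hdisj]
    have h2 := hσ (i + n * (w+1))
    have h3 : i + n * (w+1) + (w+1) = i + (n+1) * (w+1) := by ring
    rw [h3] at h2
    have := ih i
    omega

/-- High-tolerance case (2m ≥ K), w = ⌊m/(K−m)⌋. If every window of
w+1 consecutive indices contains at least 1 hit, then every window of K
consecutive indices contains at least K−m hits. -/
theorem high_tolerance_window (m K w : ℕ) (hm : 1 ≤ m) (hK : m < K)
    (hhigh : 2 * m ≥ K)
    (hw : (w : ℤ) = ⌊(m : ℚ) / ((K : ℚ) - (m : ℚ))⌋)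
    (σ : ℕ → Bool)
    (hσ : ∀ i : ℕ,
      1 ≤ ((Finset.Ico i (i + (w + 1))).filter (fun j => σ j = true)).card) :
    ∀ i : ℕ,
      K - m ≤ ((Finset.Ico i (i + K)).filter (fun j => σ j = true)).card := by
  intro i
  set d := K - m with hd
  have hcast : ((K : ℚ) - (m : ℚ)) = ((d : ℕ) : ℚ) := by
    push_cast [hd, Nat.cast_sub hK.le]; ring
  have hw' : (w : ℤ) = (m : ℤ) / (d : ℤ) := by
    rw [hw, hcast]
    have := Rat.floor_intCast_div_natCast (m : ℤ) d
    simpa using this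
  have hwnat : w = m / d := by
    have : ((m / d : ℕ) : ℤ) = (m : ℤ) / (d : ℤ) := Int.ofNat_tdiv m d
    omega
  have hdw : d * w ≤ m := by
    rw [hwnat, Nat.mul_comm]; exact Nat.div_mul_le_self m d
  have hKd : d * (w + 1) ≤ K := by
    have : d * w + d ≤ m + d := by omega
    calc d * (w+1) = d * w + d := by ring
      _ ≤ m + d := this
      _ = K := by omega
  have h1 := aux_blocks w σ hσ d i
  have hsub : Finset.Ico i (i + d * (w+1)) ⊆ Finset.Ico i (i + K) :=
    Finset.Ico_subset_Ico le_rfl (by omega)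
  have h2 := Finset.card_le_card (Finset.filter_subset_filter (fun j => σ j = true) hsub)
  omega
end

section
/- Let m, K be integers with 1 ≤ m < K, and let w = max(⌊m/(K−m)⌋, 1) and h = ⌈(K−m)/m⌉. The periodic critical sequence σ : ℕ → Bool defined by σ j = true if and only if j mod (w+h) < h satisfies the weakly-hard constraint (m, K): every window of K consecutive indices contains at most m indices with σ = false. -/
/-- In any window of length `L ≤ p`, at most `p - h` numbers have residue `≥ h` mod `p`. -/
lemma block_count_le (p h i L : ℕ) (hp : 0 < p) (hL : L ≤ p) :
    ((Finset.Ico i (i + L)).filter (fun j => ¬ j % p < h)).card ≤ p - h := by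
  have hmap : ∀ j ∈ (Finset.Ico i (i + L)).filter (fun j => ¬ j % p < h),
      j % p ∈ Finset.Ico h p := by
    intro j hj
    simp only [Finset.mem_filter, Finset.mem_Ico, not_lt] at hj ⊢
    exact ⟨hj.2, Nat.mod_lt _ hp⟩
  have hinj : ∀ a ∈ (Finset.Ico i (i + L)).filter (fun j => ¬ j % p < h),
      ∀ b ∈ (Finset.Ico i (i + L)).filter (fun j => ¬ j % p < h),
      a % p = b % p → a = b := by
    intro a ha b hb hab
    simp only [Finset.mem_filter, Finset.mem_Ico] at ha hb
    rcases le_total a b with hle | hle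
    · have hdvd : p ∣ b - a := (Nat.modEq_iff_dvd' hle).mp hab
      have hlt : b - a < p := by omega
      have := Nat.eq_zero_of_dvd_of_lt hdvd hlt
      omega
    · have hdvd : p ∣ a - b := (Nat.modEq_iff_dvd' hle).mp hab.symm
      have hlt : a - b < p := by omega
      have := Nat.eq_zero_of_dvd_of_lt hdvd hlt
      omega
  calc ((Finset.Ico i (i + L)).filter (fun j => ¬ j % p < h)).card
      ≤ (Finset.Ico h p).card := Finset.card_le_card_of_injOn _ hmap hinj
    _ = p - h := Nat.card_Ico h p

/-- In a window of length `q*p + r` (with `r < p`), at most `q*(p-h) + min r (p-h)`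
numbers have residue `≥ h` mod `p`. -/
lemma window_count_le (p h : ℕ) (hp : 0 < p) :
    ∀ q i r, r < p →
    ((Finset.Ico i (i + (q * p + r))).filter (fun j => ¬ j % p < h)).card
      ≤ q * (p - h) + min r (p - h) := by
  intro q
  induction q with
  | zero =>
      intro i r hr
      simp only [Nat.zero_mul, Nat.zero_add]
      refine le_min ?_ ?_
      · calc ((Finset.Ico i (i + r)).filter (fun j => ¬ j % p < h)).card
            ≤ (Finset.Ico i (i + r)).card := Finset.card_filter_le _ _
          _ = r := by rw [Nat.card_Ico]; omega
      · exact block_count_le p h i r hp hr.le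
  | succ q ih =>
      intro i r hr
      have hsplit : Finset.Ico i (i + ((q + 1) * p + r)) =
          Finset.Ico i (i + p) ∪ Finset.Ico (i + p) ((i + p) + (q * p + r)) := by
        rw [Finset.Ico_union_Ico_eq_Ico (by omega) (by ring_nf; omega)]
        congr 1
        ring
      rw [hsplit, Finset.filter_union]
      calc ((Finset.Ico i (i + p)).filter (fun j => ¬ j % p < h) ∪
            (Finset.Ico (i + p) ((i + p) + (q * p + r))).filter (fun j => ¬ j % p < h)).card
          ≤ ((Finset.Ico i (i + p)).filter (fun j => ¬ j % p < h)).card +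
            ((Finset.Ico (i + p) ((i + p) + (q * p + r))).filter (fun j => ¬ j % p < h)).card :=
            Finset.card_union_le _ _
        _ ≤ (p - h) + (q * (p - h) + min r (p - h)) := by
            exact Nat.add_le_add (block_count_le p h i p hp le_rfl) (ih (i + p) r hr)
        _ = (q + 1) * (p - h) + min r (p - h) := by ring

/-- For 1 ≤ m < K, with w = max(⌊m/(K−m)⌋, 1) and h = ⌈(K−m)/m⌉,
the periodic critical sequence (σ j = true iff j mod (w+h) < h) satisfies the
weakly-hard constraint (m, K). -/
theorem critical_sequence_satisfies_mK (m K w h : ℕ) (hm : 1 ≤ m) (hK : m < K)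
    (hw : (w : ℤ) = max ⌊(m : ℚ) / ((K : ℚ) - (m : ℚ))⌋ 1)
    (hh : (h : ℤ) = ⌈((K : ℚ) - (m : ℚ)) / (m : ℚ)⌉)
    (σ : ℕ → Bool) (hσ : ∀ j : ℕ, σ j = true ↔ j % (w + h) < h) :
    ∀ i : ℕ,
      ((Finset.Ico i (i + K)).filter (fun j => σ j = false)).card ≤ m := by
  intro i
  set d : ℕ := K - m with hd
  have hd1 : 1 ≤ d := by omega
  have hdq : ((K : ℚ) - (m : ℚ)) = (d : ℚ) := by
    rw [hd]; push_cast [Nat.cast_sub hK.le]; ring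
  rw [hdq] at hw hh
  have hm0 : (0 : ℚ) < (m : ℚ) := by exact_mod_cast hm
  have hd0 : (0 : ℚ) < (d : ℚ) := by exact_mod_cast hd1
  -- basic facts about w and h
  have hw1 : 1 ≤ w := by
    have : (1 : ℤ) ≤ (w : ℤ) := hw ▸ le_max_right _ _
    exact_mod_cast this
  have hh1 : 1 ≤ h := by
    have : (1 : ℤ) ≤ (h : ℤ) := by
      rw [hh]
      exact Int.ceil_pos.mpr (div_pos hd0 hm0)
    exact_mod_cast this
  have hdmh : d ≤ m * h := by
    have h1 : (d : ℚ) / (m : ℚ) ≤ ((h : ℤ) : ℚ) := hh ▸ Int.le_ceil _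
    have h2 : (d : ℚ) ≤ (m : ℚ) * (h : ℚ) := by
      rw [div_le_iff₀ hm0] at h1
      push_cast at h1
      linarith
    exact_mod_cast h2
  set p : ℕ := w + h with hp
  have hp0 : 0 < p := by omega
  -- identify the filter
  have hfilter : (Finset.Ico i (i + K)).filter (fun j => σ j = false) =
      (Finset.Ico i (i + K)).filter (fun j => ¬ j % p < h) := by
    apply Finset.filter_congr
    intro j _
    simp only [← hσ j, eq_iff_iff]
    cases hj : σ j <;> simp
  rw [hfilter]
  -- decompose K
  obtain ⟨q, r, hqr, hr⟩ : ∃ q r, K = q * p + r ∧ r < p :=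
    ⟨K / p, K % p, by rw [Nat.div_add_mod' K p], Nat.mod_lt _ hp0⟩
  have hph : p - h = w := by omega
  have hcount : ((Finset.Ico i (i + K)).filter (fun j => ¬ j % p < h)).card
      ≤ q * w + min r w := by
    rw [hqr]
    have := window_count_le p h hp0 q i r hr
    rwa [hph] at this
  refine hcount.trans ?_
  -- arithmetic: q * w + min r w ≤ m
  rcases le_or_gt d m with hcase | hcase
  · -- d ≤ m : h = 1, w * d ≤ m
    have hh2 : h = 1 := by
      have h2 : (h : ℤ) ≤ 1 := by
        rw [hh, Int.ceil_le]
        push_cast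
        rw [div_le_one hm0]
        exact_mod_cast hcase
      omega
    have hwd : w * d ≤ m := by
      have hfl : (1 : ℤ) ≤ ⌊(m : ℚ) / (d : ℚ)⌋ := by
        apply Int.le_floor.mpr
        rw [le_div_iff₀ hd0]
        push_cast
        have : (d : ℚ) ≤ (m : ℚ) := by exact_mod_cast hcase
        linarith
      have hweq : (w : ℤ) = ⌊(m : ℚ) / (d : ℚ)⌋ := by rw [hw, max_eq_left hfl]
      have h1 : ((w : ℤ) : ℚ) ≤ (m : ℚ) / (d : ℚ) := hweq ▸ Int.floor_le _
      have h2 : (w : ℚ) * (d : ℚ) ≤ (m : ℚ) := by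
        rw [← le_div_iff₀ hd0]
        exact_mod_cast h1
      exact_mod_cast h2
    have hpw : p = w + 1 := by omega
    have hKpd : p * d ≤ K := by
      have h1 : p * d = w * d + d := by rw [hpw]; ring
      omega
    have hqd : d ≤ q := by
      by_contra hqd
      push_neg at hqd
      have h2 : (q + 1) * p ≤ d * p := Nat.mul_le_mul_right p (by omega)
      have h3 : (q + 1) * p = q * p + p := by ring
      have h4 : d * p = p * d := by ring
      omega
    have hqp : q * p = q * w + q := by rw [hpw]; ring
    have hminr : min r w ≤ r := min_le_left _ _
    omega
  · -- m < d : w = 1, K ≤ m * p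
    have hw2 : w = 1 := by
      have hfl : ⌊(m : ℚ) / (d : ℚ)⌋ < 1 := by
        rw [Int.floor_lt]
        push_cast
        rw [div_lt_one hd0]
        exact_mod_cast hcase
      have hweq : (w : ℤ) = max ⌊(m : ℚ) / (d : ℚ)⌋ 1 := hw
      omega
    have hKmp : K ≤ m * p := by
      have heq : m * p = m + m * h := by rw [hp, hw2]; ring
      omega
    rw [hw2]
    rcases Nat.eq_zero_or_pos r with hr0 | hr0
    · have hq : q ≤ m := by
        have h1 : q * p ≤ m * p := by omega
        exact Nat.le_of_mul_le_mul_right h1 hp0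
      simp [hr0]
      omega
    · have hq : q < m := by
        by_contra hq
        push_neg at hq
        have h1 : m * p ≤ q * p := Nat.mul_le_mul_right p hq
        omega
      have hm1 : min r 1 ≤ 1 := min_le_right _ _
      omega
end

section
/- Let m, K be integers with 1 ≤ m < K, and let w = max(⌊m/(K−m)⌋, 1) and h = ⌈(K−m)/m⌉. Then, as integers, K − m ≤ max( ⌊K/(w+h)⌋·h , K − ⌈K/(w+h)⌉·w ). -/
/-- For 1 ≤ m < K, with w = max(⌊m/(K−m)⌋, 1) and h = ⌈(K−m)/m⌉,
K − m ≤ max(⌊K/(w+h)⌋·h, K − ⌈K/(w+h)⌉·w). -/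
theorem bernat_hardness_condition (m K w h : ℤ) (hm : 1 ≤ m) (hK : m < K)
    (hw : w = max ⌊(m : ℚ) / ((K : ℚ) - (m : ℚ))⌋ 1)
    (hh : h = ⌈((K : ℚ) - (m : ℚ)) / (m : ℚ)⌉) :
    K - m ≤ max (⌊(K : ℚ) / ((w : ℚ) + (h : ℚ))⌋ * h)
                (K - ⌈(K : ℚ) / ((w : ℚ) + (h : ℚ))⌉ * w) := by
  have hm' : (1:ℚ) ≤ (m:ℚ) := by exact_mod_cast hm
  have hK' : (m:ℚ) < (K:ℚ) := by exact_mod_cast hK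
  have hd : (0:ℚ) < (K:ℚ) - m := by linarith
  have hm0 : (0:ℚ) < (m:ℚ) := by linarith
  rcases le_or_gt (K - m) m with hc | hc
  · -- case K - m ≤ m : h = 1
    have hc' : (K:ℚ) - m ≤ m := by exact_mod_cast hc
    have hh1 : h = 1 := by
      rw [hh]
      refine le_antisymm (Int.ceil_le.mpr ?_) ?_
      · push_cast; rw [div_le_one hm0]; linarith
      · have : (0:ℤ) < ⌈((K:ℚ) - m) / m⌉ := by
          rw [Int.lt_ceil]; push_cast
          positivity
        omega
    subst hh1
    have hw1 : (1:ℤ) ≤ ⌊(m:ℚ) / ((K:ℚ) - m)⌋ := by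
      apply Int.le_floor.mpr
      rw [le_div_iff₀ hd]; push_cast; linarith
    have hwe : w = ⌊(m:ℚ) / ((K:ℚ) - m)⌋ := by rw [hw, max_eq_left hw1]
    have hwle : (w:ℚ) ≤ (m:ℚ) / ((K:ℚ) - m) := by rw [hwe]; exact Int.floor_le _
    have hw0 : (1:ℚ) ≤ (w:ℚ) := by exact_mod_cast (hwe ▸ hw1)
    -- (w+1) * (K - m) ≤ K
    have hkey : ((w:ℚ) + 1) * ((K:ℚ) - m) ≤ K := by
      have : (w:ℚ) * ((K:ℚ) - m) ≤ m := by
        rw [← le_div_iff₀ hd] ; exact hwle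
      nlinarith
    have hq : (((1:ℤ):ℚ)) = 1 := by norm_num
    have hfl : (K:ℤ) - m ≤ ⌊(K:ℚ) / ((w:ℚ) + ((1:ℤ):ℚ))⌋ := by
      apply Int.le_floor.mpr
      rw [hq]; push_cast
      rw [le_div_iff₀ (by linarith : (0:ℚ) < (w:ℚ) + 1)]
      linarith [hkey]
    calc K - m ≤ ⌊(K:ℚ) / ((w:ℚ) + ((1:ℤ):ℚ))⌋ * 1 := by omega
      _ ≤ _ := le_max_left _ _
  · -- case m < K - m : w = 1
    have hc' : (m:ℚ) < (K:ℚ) - m := by exact_mod_cast hc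
    have hw1 : w = 1 := by
      rw [hw]
      have : ⌊(m:ℚ) / ((K:ℚ) - m)⌋ = 0 := by
        apply Int.floor_eq_zero_iff.mpr
        constructor
        · positivity
        · rw [div_lt_one hd]; linarith
      rw [this]; simp
    subst hw1
    have hhge : ((K:ℚ) - m) / m ≤ (h:ℚ) := by rw [hh]; exact_mod_cast Int.le_ceil _
    have hkey : (K:ℚ) ≤ (1 + (h:ℚ)) * m := by
      have : (K:ℚ) - m ≤ (h:ℚ) * m := by
        rw [← div_le_iff₀ hm0]; exact hhge
      nlinarith
    have hh0 : (0:ℚ) < (h:ℚ) := by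
      have : (0:ℚ) < ((K:ℚ) - m) / m := by positivity
      linarith
    have hwq : (((1:ℤ):ℚ)) = 1 := by norm_num
    have hcl : ⌈(K:ℚ) / (((1:ℤ):ℚ) + (h:ℚ))⌉ ≤ m := by
      apply Int.ceil_le.mpr
      rw [hwq]
      rw [div_le_iff₀ (by linarith : (0:ℚ) < 1 + (h:ℚ))]
      linarith [hkey]
    calc K - m ≤ K - ⌈(K:ℚ) / (((1:ℤ):ℚ) + (h:ℚ))⌉ * 1 := by omega
      _ ≤ _ := le_max_right _ _
end

section
/- Let a, b, q be natural numbers with b ≥ 1 and a ≤ b. If a binary sequence σ : ℕ → Bool is such that every window of b consecutive indices contains at least a hits, then every window of q consecutive indices contains at least ⌊q/b⌋·a hits. -/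
lemma hits_blocks (a b : ℕ) (σ : ℕ → Bool)
    (hσ : ∀ i : ℕ,
      a ≤ ((Finset.Ico i (i + b)).filter (fun j => σ j = true)).card) :
    ∀ k i : ℕ,
      k * a ≤ ((Finset.Ico i (i + k * b)).filter (fun j => σ j = true)).card := by
  intro k
  induction k with
  | zero => simp
  | succ n ih =>
    intro i
    have hsplit : Finset.Ico i (i + (n + 1) * b)
        = Finset.Ico i (i + b) ∪ Finset.Ico (i + b) (i + b + n * b) := by
      rw [Finset.Ico_union_Ico_eq_Ico (by omega) (by omega)]
      congr 1
      ring
    have hdisj : Disjoint ((Finset.Ico i (i + b)).filter (fun j => σ j = true))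
        ((Finset.Ico (i + b) (i + b + n * b)).filter (fun j => σ j = true)) := by
      apply Finset.disjoint_filter_filter
      exact Finset.Ico_disjoint_Ico_consecutive _ _ _
    rw [hsplit, Finset.filter_union, Finset.card_union_of_disjoint hdisj]
    have h1 := hσ i
    have h2 := ih (i + b)
    calc (n + 1) * a = a + n * a := by ring
    _ ≤ _ := Nat.add_le_add h1 h2

/-- If every window of b consecutive indices contains at least a
hits (a ≤ b, b ≥ 1), then every window of q consecutive indices contains at
least ⌊q/b⌋·a hits. -/
theorem hits_lower_bound (a b q : ℕ) (hb : 1 ≤ b) (hab : a ≤ b)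
    (σ : ℕ → Bool)
    (hσ : ∀ i : ℕ,
      a ≤ ((Finset.Ico i (i + b)).filter (fun j => σ j = true)).card) :
    ∀ i : ℕ,
      ⌊(q : ℚ) / (b : ℚ)⌋ * a ≤
        (((Finset.Ico i (i + q)).filter (fun j => σ j = true)).card : ℤ) := by
  intro i
  rw [Rat.floor_natCast_div_natCast]
  have h1 := hits_blocks a b σ hσ (q / b) i
  have h2 : ((Finset.Ico i (i + q / b * b)).filter (fun j => σ j = true)).card
      ≤ ((Finset.Ico i (i + q)).filter (fun j => σ j = true)).card := by
    apply Finset.card_le_card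
    apply Finset.filter_subset_filter
    apply Finset.Ico_subset_Ico le_rfl
    have := Nat.div_mul_le_self q b
    omega
  have : q / b * a ≤ ((Finset.Ico i (i + q)).filter (fun j => σ j = true)).card := by
    omega
  exact_mod_cast this
end

section
/- Let d, b, q be natural numbers with b ≥ 1. If a binary sequence σ : ℕ → Bool is such that every window of b consecutive indices contains at most d misses, then every window of q consecutive indices contains at most ⌈q/b⌉·d misses. -/
/-- If every window of b consecutive indices contains at most d
misses (b ≥ 1), then every window of q consecutive indices contains at most
⌈q/b⌉·d misses. -/
theorem misses_upper_bound (d b q : ℕ) (hb : 1 ≤ b)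
    (σ : ℕ → Bool)
    (hσ : ∀ i : ℕ,
      ((Finset.Ico i (i + b)).filter (fun j => σ j = false)).card ≤ d) :
    ∀ i : ℕ,
      (((Finset.Ico i (i + q)).filter (fun j => σ j = false)).card : ℤ) ≤
        ⌈(q : ℚ) / (b : ℚ)⌉ * d := by
  induction q using Nat.strong_induction_on with
  | _ q ih =>
    intro i
    rcases Nat.eq_zero_or_pos q with hq | hq
    · subst hq
      simp
    rcases le_or_gt q b with hqb | hqb
    · -- one window suffices
      have hsub : (Finset.Ico i (i + q)).filter (fun j => σ j = false) ⊆
          (Finset.Ico i (i + b)).filter (fun j => σ j = false) :=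
        Finset.filter_subset_filter _ (Finset.Ico_subset_Ico le_rfl (by omega))
      have h1 : (((Finset.Ico i (i + q)).filter (fun j => σ j = false)).card : ℤ) ≤ d := by
        exact_mod_cast (Finset.card_le_card hsub).trans (hσ i)
      have hceil : (1 : ℤ) ≤ ⌈(q : ℚ) / (b : ℚ)⌉ := by
        rw [Int.le_ceil_iff]
        have hq' : (0:ℚ) < q := by exact_mod_cast hq
        have : (0:ℚ) < (q:ℚ)/b := div_pos hq' (by positivity)
        push_cast
        linarith
      calc (((Finset.Ico i (i + q)).filter (fun j => σ j = false)).card : ℤ) ≤ d := h1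
        _ = 1 * d := (one_mul _).symm
        _ ≤ ⌈(q : ℚ) / (b : ℚ)⌉ * d := by
            exact mul_le_mul_of_nonneg_right hceil (by positivity)
    · -- split off first window
      have hsplit : Finset.Ico i (i + q) = Finset.Ico i (i + b) ∪ Finset.Ico (i + b) (i + q) := by
        rw [Finset.Ico_union_Ico_eq_Ico (by omega) (by omega)]
      have hdisj : Disjoint (Finset.Ico i (i + b)) (Finset.Ico (i + b) (i + q)) :=
        Finset.Ico_disjoint_Ico_consecutive _ _ _
      have hcard : ((Finset.Ico i (i + q)).filter (fun j => σ j = false)).card =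
          ((Finset.Ico i (i + b)).filter (fun j => σ j = false)).card +
          ((Finset.Ico (i + b) (i + q)).filter (fun j => σ j = false)).card := by
        rw [hsplit, Finset.filter_union, Finset.card_union_of_disjoint
          (Finset.disjoint_filter_filter hdisj)]
      have hrew : i + q = (i + b) + (q - b) := by omega
      have h2 := ih (q - b) (by omega) (i + b)
      have hceil : ⌈(q : ℚ) / (b : ℚ)⌉ = ⌈((q - b : ℕ) : ℚ) / (b : ℚ)⌉ + 1 := by
        have hq' : (q : ℚ) = ((q - b : ℕ) : ℚ) + b := by
          push_cast [Nat.cast_sub (le_of_lt hqb)]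
          ring
        have hb' : (b : ℚ) ≠ 0 := by positivity
        rw [hq', add_div, div_self hb', Int.ceil_add_one]
      rw [hrew] at hcard ⊢
      rw [hcard, hceil]
      push_cast
      have h1 : (((Finset.Ico i (i + b)).filter (fun j => σ j = false)).card : ℤ) ≤ d := by
        exact_mod_cast hσ i
      nlinarith [h2, h1]
end
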